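/- Let n ≥ 1, p ∈ [1, ∞), 0 < s < 1, ρ > 0 and x₀ ∈ ℝ^n. Let φ: ℝ^n → [0,∞) be bounded with support in B(0,1) and ∫ φ = 1, and set φ_ρ(x) = ρ^{-n} φ(x/ρ). Then there is a constant C = C(n, p, ‖φ‖_∞) such that for any measurable f: ℝ^n → ℝ with finite Besov seminorm ‖f‖_{Ḃ^{s,p}_p} := (∫∫ |f(x)-f(y)|^p / |x-y|^{n+sp} dx dy)^{1/p}, one has (∫_{B(x₀,ρ)} |f(x) - (f * φ_ρ)(x₀)|^p dx)^{1/p} ≤ C ρ^s ‖f‖_{Ḃ^{s,p}_p}. -/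

import Mathlib

/-!
Since `φ_ρ` is a probability density supported in `B(0, ρ)` and bounded by `ρ^{-n} ‖φ‖_∞`,
Jensen's inequality for `t ↦ t^p` gives, for every `x`,
`|f x - (f * φ_ρ)(x₀)|^p ≤ ρ^{-n} ‖φ‖_∞ ∫_{B̄(x₀, ρ)} |f x - f z|^p dz`.
For `x ∈ B(x₀, ρ)` and `z ∈ B̄(x₀, ρ)` we have `‖x - z‖ ≤ 2ρ`, so
`|f x - f z|^p ≤ (2ρ)^{n+sp} |f x - f z|^p / ‖x - z‖^{n+sp}`, and integrating in `x` bounds the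
left-hand side by `ρ^{-n} ‖φ‖_∞ (2ρ)^{n+sp} ‖f‖^p`. That `(f * φ_ρ)(x₀)` is a genuine integral
comes from the finiteness of the seminorm: for almost every `a` the slice
`z ↦ |f a - f z|^p / ‖a - z‖^{n+sp}` is integrable, and on a ball it dominates a multiple of
`|f a - f z|^p`, so `f` is locally `L^p`.
-/

open MeasureTheory Metric Set
open scoped ENNReal

section WeightedMean

variable {α : Type*} [MeasurableSpace α] {μ : Measure α} {u k : α → ℝ} {S : Set α} {K p : ℝ}

theorem rpow_lintegral_le_lintegral_rpow (hμ : μ univ ≤ 1) {f : α → ℝ≥0∞} (hf : AEMeasurable f μ)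
    (hp : 1 ≤ p) :
    (∫⁻ a, f a ∂μ) ^ p ≤ ∫⁻ a, f a ^ p ∂μ := by
  have hp0 : 0 < p := one_pos.trans_le hp
  have hHolder := eLpNorm'_le_eLpNorm'_mul_rpow_measure_univ one_pos hp hf.aestronglyMeasurable
  simp only [eLpNorm'_eq_lintegral_enorm, enorm_eq_self, ENNReal.rpow_one, div_one] at hHolder
  have hμp : μ univ ^ (1 - 1 / p) ≤ 1 :=
    ENNReal.rpow_le_one hμ (sub_nonneg.2 ((div_le_one hp0).2 hp))
  calc (∫⁻ a, f a ∂μ) ^ p ≤ ((∫⁻ a, f a ^ p ∂μ) ^ (1 / p)) ^ p :=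
        ENNReal.rpow_le_rpow (hHolder.trans (mul_le_of_le_one_right' hμp)) hp0.le
    _ = ∫⁻ a, f a ^ p ∂μ := by
        rw [← ENNReal.rpow_mul, one_div_mul_cancel hp0.ne', ENNReal.rpow_one]

theorem abs_sub_integral_mul_le (hk0 : 0 ≤ k) (hk : Integrable k μ) (hk1 : ∫ a, k a ∂μ = 1)
    (huk : Integrable (fun a => u a * k a) μ) (t : ℝ) :
    |t - ∫ a, u a * k a ∂μ| ≤ ∫ a, |t - u a| * k a ∂μ := by
  have hsub : t - ∫ a, u a * k a ∂μ = ∫ a, (t - u a) * k a ∂μ := by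
    simp only [sub_mul]
    rw [integral_sub (hk.const_mul t) huk, integral_const_mul, hk1, mul_one]
  rw [hsub]
  refine (abs_integral_le_integral_abs).trans_eq (integral_congr_ae (ae_of_all _ fun a => ?_))
  simp only [abs_mul, abs_of_nonneg (hk0 a)]

theorem ofReal_abs_sub_integral_mul_rpow_le (hu : Measurable u) (hk0 : 0 ≤ k) (hk : Integrable k μ)
    (hk1 : ∫ a, k a ∂μ = 1) (huk : Integrable (fun a => u a * k a) μ) (t : ℝ) (hp : 1 ≤ p) :
    ENNReal.ofReal (|t - ∫ a, u a * k a ∂μ| ^ p) ≤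
      ∫⁻ a, ENNReal.ofReal (k a) * ENNReal.ofReal (|t - u a| ^ p) ∂μ := by
  have hp0 : 0 ≤ p := zero_le_one.trans hp
  have hkm : AEMeasurable (fun a => ENNReal.ofReal (k a)) μ := hk.1.aemeasurable.ennreal_ofReal
  have hdm : Measurable (fun a => ENNReal.ofReal |t - u a|) :=
    (measurable_const.sub hu).abs.ennreal_ofReal
  set ν := μ.withDensity fun a => ENNReal.ofReal (k a)
  have hν : ν univ = 1 := by
    rw [withDensity_apply _ MeasurableSet.univ, Measure.restrict_univ,
      ← ofReal_integral_eq_lintegral_ofReal hk (ae_of_all _ hk0), hk1, ENNReal.ofReal_one]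
  have hmean : ENNReal.ofReal |t - ∫ a, u a * k a ∂μ| ≤ ∫⁻ a, ENNReal.ofReal |t - u a| ∂ν := by
    have hint : Integrable (fun a => |t - u a| * k a) μ := by
      refine ((hk.const_mul t).sub huk).abs.congr (ae_of_all _ fun a => ?_)
      simp only [Pi.sub_apply, ← sub_mul, abs_mul, abs_of_nonneg (hk0 a)]
    rw [lintegral_withDensity_eq_lintegral_mul₀ hkm hdm.aemeasurable]
    refine (ENNReal.ofReal_le_ofReal (abs_sub_integral_mul_le hk0 hk hk1 huk t)).trans_eq ?_
    rw [ofReal_integral_eq_lintegral_ofReal hint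
      (ae_of_all _ fun a => mul_nonneg (abs_nonneg _) (hk0 a))]
    refine lintegral_congr fun a => ?_
    rw [Pi.mul_apply, mul_comm, ENNReal.ofReal_mul (hk0 a)]
  calc ENNReal.ofReal (|t - ∫ a, u a * k a ∂μ| ^ p)
      = ENNReal.ofReal |t - ∫ a, u a * k a ∂μ| ^ p :=
        (ENNReal.ofReal_rpow_of_nonneg (abs_nonneg _) hp0).symm
    _ ≤ (∫⁻ a, ENNReal.ofReal |t - u a| ∂ν) ^ p := ENNReal.rpow_le_rpow hmean hp0
    _ ≤ ∫⁻ a, ENNReal.ofReal |t - u a| ^ p ∂ν :=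
        rpow_lintegral_le_lintegral_rpow hν.le hdm.aemeasurable hp
    _ = ∫⁻ a, ENNReal.ofReal (k a) * ENNReal.ofReal (|t - u a| ^ p) ∂μ := by
        rw [lintegral_withDensity_eq_lintegral_mul₀ hkm (hdm.pow_const p).aemeasurable]
        refine lintegral_congr fun a => ?_
        rw [Pi.mul_apply, ENNReal.ofReal_rpow_of_nonneg (abs_nonneg _) hp0]

theorem integrable_mul_of_integrableOn (hS : MeasurableSet S) (huS : IntegrableOn u S μ)
    (hk : AEStronglyMeasurable k μ) (hk0 : 0 ≤ k) (hkK : ∀ a, k a ≤ K) (hkS : ∀ a ∉ S, k a = 0) :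
    Integrable (fun a => u a * k a) μ := by
  refine ((integrable_indicator_iff hS).2 huS).mul_bdd hk
    (ae_of_all _ fun a => (abs_of_nonneg (hk0 a)).trans_le (hkK a)) |>.congr
    (ae_of_all _ fun a => ?_)
  by_cases ha : a ∈ S
  · simp [indicator_of_mem ha]
  · simp [indicator_of_notMem ha, hkS a ha]

theorem ofReal_abs_sub_integral_mul_rpow_le_setLIntegral (hu : Measurable u) (hS : MeasurableSet S)
    (huS : IntegrableOn u S μ) (hk : Integrable k μ) (hk0 : 0 ≤ k) (hkK : ∀ a, k a ≤ K)
    (hkS : ∀ a ∉ S, k a = 0) (hk1 : ∫ a, k a ∂μ = 1) (hp : 1 ≤ p) (t : ℝ) :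
    ENNReal.ofReal (|t - ∫ a, u a * k a ∂μ| ^ p) ≤
      ENNReal.ofReal K * ∫⁻ a in S, ENNReal.ofReal (|t - u a| ^ p) ∂μ := by
  refine (ofReal_abs_sub_integral_mul_rpow_le hu hk0 hk hk1
    (integrable_mul_of_integrableOn hS huS hk.1 hk0 hkK hkS) t hp).trans ?_
  rw [← lintegral_const_mul' _ _ ENNReal.ofReal_ne_top, ← lintegral_indicator hS]
  refine lintegral_mono fun a => ?_
  by_cases ha : a ∈ S
  · rw [indicator_of_mem ha]
    gcongr
    exact hkK a
  · simp [indicator_of_notMem ha, hkS a ha]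

end WeightedMean

section Besov

variable {E : Type*} [NormedAddCommGroup E] {f : E → ℝ} {p r : ℝ}

/-- With `r = n + s p`, the integral of `besovIntegrand f p r` over `E × E` is the `p`-th power of
the homogeneous Besov seminorm `‖f‖_{Ḃ^{s,p}_p}`. -/
noncomputable def besovIntegrand (f : E → ℝ) (p r : ℝ) (z : E × E) : ℝ :=
  |f z.1 - f z.2| ^ p / ‖z.1 - z.2‖ ^ r

theorem besovIntegrand_nonneg (z : E × E) : 0 ≤ besovIntegrand f p r z := by
  unfold besovIntegrand
  positivity

theorem abs_sub_rpow_le_mul_besovIntegrand {x y : E} {R : ℝ} (hxy : x ≠ y) (hR : ‖x - y‖ ≤ R)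
    (hr : 0 ≤ r) : |f x - f y| ^ p ≤ R ^ r * besovIntegrand f p r (x, y) := by
  have hd : 0 < ‖x - y‖ ^ r := Real.rpow_pos_of_pos (norm_pos_iff.2 (sub_ne_zero.2 hxy)) r
  rw [besovIntegrand, mul_div_left_comm]
  refine le_mul_of_one_le_right (by positivity) ?_
  rw [one_le_div hd]
  exact Real.rpow_le_rpow (norm_nonneg _) hR hr

variable [MeasurableSpace E] {μ : Measure E}

theorem ae_restrict_abs_sub_rpow_le_mul_besovIntegrand [NullSingletonClass μ] {S : Set E}
    {x : E} {R : ℝ} (hS : MeasurableSet S) (hSx : S ⊆ closedBall x R) (hr : 0 ≤ r) :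
    ∀ᵐ y ∂μ.restrict S, |f x - f y| ^ p ≤ R ^ r * besovIntegrand f p r (x, y) := by
  filter_upwards [ae_restrict_of_ae (μ.ae_ne x), ae_restrict_mem hS] with y hyx hyS
  refine abs_sub_rpow_le_mul_besovIntegrand (Ne.symm hyx) ?_ hr
  simpa [dist_eq_norm'] using hSx hyS

variable [BorelSpace E]

theorem measurable_besovIntegrand [SecondCountableTopology E] (hf : Measurable f) :
    Measurable (besovIntegrand f p r) :=
  (((hf.comp measurable_fst).sub (hf.comp measurable_snd)).abs.pow_const p).div
    ((measurable_fst.sub measurable_snd).norm.pow_const r)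

theorem integrableOn_closedBall_of_integrable_besovIntegrand [ProperSpace E] [SFinite μ]
    [NullSingletonClass μ] [IsFiniteMeasureOnCompacts μ] [NeZero μ] (hf : Measurable f)
    (hp : 1 ≤ p) (hr : 0 ≤ r) (hI : Integrable (besovIntegrand f p r) (μ.prod μ)) (x : E)
    (R : ℝ) : IntegrableOn f (closedBall x R) μ := by
  obtain ⟨a, ha⟩ := hI.prod_right_ae.exists
  have : IsFiniteMeasure (μ.restrict (closedBall x R)) :=
    isFiniteMeasure_restrict.2 measure_closedBall_lt_top.ne
  have hdiff : Integrable (fun y => |f a - f y| ^ p) (μ.restrict (closedBall x R)) := by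
    refine (ha.const_mul ((R + dist x a) ^ r)).integrableOn.mono'
      ((measurable_const.sub hf).abs.pow_const p).aestronglyMeasurable ?_
    filter_upwards [ae_restrict_abs_sub_rpow_le_mul_besovIntegrand isClosed_closedBall.measurableSet
      (closedBall_subset_closedBall' le_rfl) hr] with y hy
    rwa [Real.norm_of_nonneg (by positivity)]
  have hp0 : ENNReal.ofReal p ≠ 0 := (ENNReal.ofReal_pos.2 (by linarith)).ne'
  have hdiffLp : MemLp (fun y => f a - f y) (ENNReal.ofReal p) (μ.restrict (closedBall x R)) := by
    refine (integrable_norm_rpow_iff (measurable_const.sub hf).aestronglyMeasurable hp0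
      ENNReal.ofReal_ne_top).1 ?_
    simpa [ENNReal.toReal_ofReal (zero_le_one.trans hp)] using hdiff
  have hfLp : MemLp f (ENNReal.ofReal p) (μ.restrict (closedBall x R)) := by
    convert (memLp_const (f a)).sub hdiffLp using 1
    ext y
    simp
  exact hfLp.integrable (ENNReal.one_le_ofReal.2 hp)

theorem setLIntegral_setLIntegral_abs_sub_rpow_le [SecondCountableTopology E] [SFinite μ]
    [NullSingletonClass μ] {A S : Set E} {R : ℝ} (hf : Measurable f) (hA : MeasurableSet A)
    (hS : MeasurableSet S) (hAS : ∀ x ∈ A, S ⊆ closedBall x R) (hr : 0 ≤ r) :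
    ∫⁻ x in A, ∫⁻ y in S, ENNReal.ofReal (|f x - f y| ^ p) ∂μ ∂μ ≤
      ENNReal.ofReal (R ^ r) * ∫⁻ z, ENNReal.ofReal (besovIntegrand f p r z) ∂μ.prod μ := by
  calc ∫⁻ x in A, ∫⁻ y in S, ENNReal.ofReal (|f x - f y| ^ p) ∂μ ∂μ
      ≤ ∫⁻ x in A, ENNReal.ofReal (R ^ r) *
          ∫⁻ y in S, ENNReal.ofReal (besovIntegrand f p r (x, y)) ∂μ ∂μ := by
        refine setLIntegral_mono' hA fun x hx => ?_
        rw [← lintegral_const_mul' _ _ ENNReal.ofReal_ne_top]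
        refine lintegral_mono_ae ?_
        filter_upwards [ae_restrict_abs_sub_rpow_le_mul_besovIntegrand hS (hAS x hx) hr] with y hy
        rw [← ENNReal.ofReal_mul' (besovIntegrand_nonneg _)]
        exact ENNReal.ofReal_le_ofReal hy
    _ = ENNReal.ofReal (R ^ r) *
          ∫⁻ z in A ×ˢ S, ENNReal.ofReal (besovIntegrand f p r z) ∂μ.prod μ := by
        rw [lintegral_const_mul' _ _ ENNReal.ofReal_ne_top, ← Measure.prod_restrict,
          lintegral_lintegral (measurable_besovIntegrand hf).ennreal_ofReal.aemeasurable]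
    _ ≤ ENNReal.ofReal (R ^ r) * ∫⁻ z, ENNReal.ofReal (besovIntegrand f p r z) ∂μ.prod μ :=
        mul_le_mul_right (setLIntegral_le_lintegral _ _) _

theorem setIntegral_abs_sub_integral_mul_rpow_le [SecondCountableTopology E] [SFinite μ]
    [NullSingletonClass μ] {k : E → ℝ} {A S : Set E} {K R : ℝ} (hf : Measurable f)
    (hA : MeasurableSet A) (hS : MeasurableSet S) (hAS : ∀ x ∈ A, S ⊆ closedBall x R)
    (hR : 0 ≤ R) (hfS : IntegrableOn f S μ) (hk : Integrable k μ) (hk0 : 0 ≤ k)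
    (hkK : ∀ a, k a ≤ K) (hkS : ∀ a ∉ S, k a = 0) (hk1 : ∫ a, k a ∂μ = 1) (hp : 1 ≤ p)
    (hr : 0 ≤ r) (hI : Integrable (besovIntegrand f p r) (μ.prod μ)) :
    ∫ x in A, |f x - ∫ y, f y * k y ∂μ| ^ p ∂μ ≤
      K * R ^ r * ∫ z, besovIntegrand f p r z ∂μ.prod μ := by
  have hK : 0 ≤ K := (hk0 0).trans (hkK 0)
  have hlint : ∫⁻ x in A, ENNReal.ofReal (|f x - ∫ y, f y * k y ∂μ| ^ p) ∂μ ≤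
      ENNReal.ofReal K * (ENNReal.ofReal (R ^ r) *
        ∫⁻ z, ENNReal.ofReal (besovIntegrand f p r z) ∂μ.prod μ) := by
    calc _ ≤ ∫⁻ x in A, ENNReal.ofReal K *
            ∫⁻ y in S, ENNReal.ofReal (|f x - f y| ^ p) ∂μ ∂μ :=
          lintegral_mono fun x => ofReal_abs_sub_integral_mul_rpow_le_setLIntegral hf hS hfS hk
            hk0 hkK hkS hk1 hp (f x)
      _ ≤ _ := by
          rw [lintegral_const_mul' _ _ ENNReal.ofReal_ne_top]
          gcongr
          exact setLIntegral_setLIntegral_abs_sub_rpow_le hf hA hS hAS hr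
  set c := ∫ y, f y * k y ∂μ
  have hL := integral_eq_lintegral_of_nonneg_ae (μ := μ.restrict A) (f := fun x => |f x - c| ^ p)
    (ae_of_all _ fun x => by positivity)
    ((hf.sub measurable_const).abs.pow_const p).aestronglyMeasurable
  rw [hL, integral_eq_lintegral_of_nonneg_ae (ae_of_all _ besovIntegrand_nonneg) hI.1]
  refine (ENNReal.toReal_mono ?_ hlint).trans_eq ?_
  · exact ENNReal.mul_ne_top ENNReal.ofReal_ne_top
      (ENNReal.mul_ne_top ENNReal.ofReal_ne_top hI.lintegral_lt_top.ne)
  · rw [ENNReal.toReal_mul, ENNReal.toReal_mul, ENNReal.toReal_ofReal hK,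
      ENNReal.toReal_ofReal (by positivity), mul_assoc]

end Besov

section Mollifier

variable {E : Type*} [NormedAddCommGroup E] [NormedSpace ℝ E] {φ : E → ℝ} {ρ : ℝ}

noncomputable def mollifier (φ : E → ℝ) (ρ : ℝ) (y : E) : ℝ :=
  ρ ^ (-(Module.finrank ℝ E : ℝ)) * φ (ρ⁻¹ • y)

theorem mollifier_nonneg (hφ0 : ∀ x, 0 ≤ φ x) (hρ : 0 ≤ ρ) (y : E) : 0 ≤ mollifier φ ρ y :=
  mul_nonneg (Real.rpow_nonneg hρ _) (hφ0 _)

theorem mollifier_le {M : ℝ} (hφM : ∀ x, φ x ≤ M) (hρ : 0 ≤ ρ) (y : E) :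
    mollifier φ ρ y ≤ ρ ^ (-(Module.finrank ℝ E : ℝ)) * M :=
  mul_le_mul_of_nonneg_left (hφM _) (Real.rpow_nonneg hρ _)

theorem mollifier_eq_zero (hφ : Function.support φ ⊆ closedBall 0 1) (hρ : 0 < ρ) {y : E}
    (hy : y ∉ closedBall 0 ρ) : mollifier φ ρ y = 0 := by
  suffices φ (ρ⁻¹ • y) = 0 by rw [mollifier, this, mul_zero]
  refine Function.notMem_support.1 fun h => hy ?_
  have := hφ h
  rw [mem_closedBall_zero_iff, norm_smul, norm_inv, Real.norm_of_nonneg hρ.le,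
    inv_mul_le_iff₀ hρ, mul_one] at this
  exact mem_closedBall_zero_iff.2 this

variable [MeasurableSpace E] [BorelSpace E] [FiniteDimensional ℝ E] (μ : Measure E)
  [μ.IsAddHaarMeasure]

theorem integrable_mollifier (hφ : Integrable φ μ) (hρ : ρ ≠ 0) : Integrable (mollifier φ ρ) μ :=
  ((integrable_comp_smul_iff μ φ (inv_ne_zero hρ)).2 hφ).const_mul _

theorem integral_mollifier (hρ : 0 < ρ) : ∫ y, mollifier φ ρ y ∂μ = ∫ y, φ y ∂μ := by
  simp only [mollifier]
  rw [integral_const_mul, Measure.integral_comp_inv_smul_of_nonneg μ φ hρ.le, smul_eq_mul,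
    ← mul_assoc, ← Real.rpow_natCast, ← Real.rpow_add hρ, neg_add_cancel, Real.rpow_zero, one_mul]

theorem setIntegral_ball_abs_sub_mollified_rpow_le [Nontrivial E] {M p r : ℝ} (hφ0 : ∀ x, 0 ≤ φ x)
    (hφM : ∀ x, φ x ≤ M) (hφsupp : Function.support φ ⊆ closedBall 0 1) (hφ1 : ∫ x, φ x ∂μ = 1)
    {f : E → ℝ} (hf : Measurable f) (hp : 1 ≤ p) (hr : 0 ≤ r)
    (hI : Integrable (besovIntegrand f p r) (μ.prod μ)) (x₀ : E) (hρ : 0 < ρ) :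
    ∫ x in ball x₀ ρ, |f x - ∫ y, f (x₀ - y) * mollifier φ ρ y ∂μ| ^ p ∂μ ≤
      ρ ^ (-(Module.finrank ℝ E : ℝ)) * M * (2 * ρ) ^ r *
        ∫ z, besovIntegrand f p r z ∂μ.prod μ := by
  have hφ : Integrable φ μ := Integrable.of_integral_ne_zero (by rw [hφ1]; exact one_ne_zero)
  have hconv : ∫ y, f (x₀ - y) * mollifier φ ρ y ∂μ = ∫ z, f z * mollifier φ ρ (x₀ - z) ∂μ := by
    simpa using integral_sub_left_eq_self (fun y => f y * mollifier φ ρ (x₀ - y)) μ x₀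
  rw [hconv]
  refine setIntegral_abs_sub_integral_mul_rpow_le hf measurableSet_ball
    isClosed_closedBall.measurableSet (fun x hx => closedBall_subset_closedBall' ?_)
    (by positivity) (integrableOn_closedBall_of_integrable_besovIntegrand hf hp hr hI x₀ ρ)
    ((integrable_mollifier μ hφ hρ.ne').comp_sub_left x₀) (fun z => mollifier_nonneg hφ0 hρ.le _)
    (fun z => mollifier_le hφM hρ.le _) (fun z hz => mollifier_eq_zero hφsupp hρ ?_) ?_ hp hr hI
  · rw [mem_ball, dist_comm] at hx
    linarith
  · rwa [mem_closedBall_zero_iff, norm_sub_rev, ← dist_eq_norm, ← mem_closedBall]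
  · rw [integral_sub_left_eq_self (mollifier φ ρ) μ x₀, integral_mollifier μ hρ, hφ1]

end Mollifier

theorem stmt_9_general (n : ℕ) (hn : 1 ≤ n) (p s : ℝ) (hp1 : 1 ≤ p) (hs0 : 0 < s)
    (φ : EuclideanSpace ℝ (Fin n) → ℝ) (hφ0 : ∀ x, 0 ≤ φ x)
    (hφb : ∃ M, ∀ x, φ x ≤ M)
    (hφsupp : Function.support φ ⊆ Metric.closedBall 0 1)
    (hφ1 : ∫ x, φ x = 1) :
    ∃ C > 0, ∀ (f : EuclideanSpace ℝ (Fin n) → ℝ), Measurable f →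
      Integrable (fun z : EuclideanSpace ℝ (Fin n) × EuclideanSpace ℝ (Fin n) =>
        |f z.1 - f z.2| ^ p / ‖z.1 - z.2‖ ^ ((n : ℝ) + s * p)) volume →
      ∀ (x₀ : EuclideanSpace ℝ (Fin n)) (ρ : ℝ), 0 < ρ →
        (∫ x in Metric.ball x₀ ρ,
            |f x - ∫ y, f (x₀ - y) * (ρ ^ (-(n : ℝ)) * φ (ρ⁻¹ • y))| ^ p) ^ (1 / p) ≤
          C * ρ ^ s *
            (∫ z : EuclideanSpace ℝ (Fin n) × EuclideanSpace ℝ (Fin n),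
              |f z.1 - f z.2| ^ p / ‖z.1 - z.2‖ ^ ((n : ℝ) + s * p)) ^ (1 / p) := by
  have : Nontrivial (EuclideanSpace ℝ (Fin n)) :=
    ⟨⟨EuclideanSpace.single ⟨0, hn⟩ 1, 0, by simp⟩⟩
  obtain ⟨M, hM⟩ := hφb
  refine ⟨(max M 1 * 2 ^ ((n : ℝ) + s * p)) ^ (1 / p), by positivity, fun f hf hI x₀ ρ hρ => ?_⟩
  have hp0 : 0 < p := one_pos.trans_le hp1
  have key := setIntegral_ball_abs_sub_mollified_rpow_le volume hφ0
    (fun x => (hM x).trans (le_max_left M 1)) hφsupp hφ1 hf hp1 (by positivity) hI x₀ hρ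
  simp only [mollifier, finrank_euclideanSpace_fin] at key
  set I := ∫ z : EuclideanSpace ℝ (Fin n) × EuclideanSpace ℝ (Fin n),
    |f z.1 - f z.2| ^ p / ‖z.1 - z.2‖ ^ ((n : ℝ) + s * p)
  have hI0 : 0 ≤ I := integral_nonneg fun z => by positivity
  calc _ ≤ (ρ ^ (-(n : ℝ)) * max M 1 * (2 * ρ) ^ ((n : ℝ) + s * p) * I) ^ (1 / p) :=
        Real.rpow_le_rpow (setIntegral_nonneg measurableSet_ball fun x _ => by positivity) key
          (by positivity)
    _ = (max M 1 * 2 ^ ((n : ℝ) + s * p) * (ρ ^ s) ^ p * I) ^ (1 / p) := by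
        have hρn : ρ ^ (-(n : ℝ)) * ρ ^ (n : ℝ) = 1 := by
          rw [← Real.rpow_add hρ, neg_add_cancel, Real.rpow_zero]
        congr 1
        rw [Real.mul_rpow zero_le_two hρ.le, Real.rpow_add hρ, Real.rpow_mul hρ.le]
        linear_combination (max M 1 * 2 ^ ((n : ℝ) + s * p) * (ρ ^ s) ^ p * I) * hρn
    _ = (max M 1 * 2 ^ ((n : ℝ) + s * p)) ^ (1 / p) * ρ ^ s * I ^ (1 / p) := by
        rw [Real.mul_rpow (by positivity) hI0, Real.mul_rpow (by positivity) (by positivity),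
          ← Real.rpow_mul (by positivity), mul_one_div_cancel hp0.ne', Real.rpow_one]

theorem stmt_9 (n : ℕ) (hn : 1 ≤ n) (p s : ℝ) (hp1 : 1 ≤ p) (hs0 : 0 < s) (hs1 : s < 1)
    (φ : EuclideanSpace ℝ (Fin n) → ℝ) (hφ0 : ∀ x, 0 ≤ φ x)
    (hφb : ∃ M, ∀ x, φ x ≤ M)
    (hφsupp : Function.support φ ⊆ Metric.closedBall 0 1)
    (hφ1 : ∫ x, φ x = 1) :
    ∃ C > 0, ∀ (f : EuclideanSpace ℝ (Fin n) → ℝ), Measurable f →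
      Integrable (fun z : EuclideanSpace ℝ (Fin n) × EuclideanSpace ℝ (Fin n) =>
        |f z.1 - f z.2| ^ p / ‖z.1 - z.2‖ ^ ((n : ℝ) + s * p)) volume →
      ∀ (x₀ : EuclideanSpace ℝ (Fin n)) (ρ : ℝ), 0 < ρ →
        (∫ x in Metric.ball x₀ ρ,
            |f x - ∫ y, f (x₀ - y) * (ρ ^ (-(n : ℝ)) * φ (ρ⁻¹ • y))| ^ p) ^ (1 / p) ≤
          C * ρ ^ s *
            (∫ z : EuclideanSpace ℝ (Fin n) × EuclideanSpace ℝ (Fin n),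
              |f z.1 - f z.2| ^ p / ‖z.1 - z.2‖ ^ ((n : ℝ) + s * p)) ^ (1 / p) :=
  stmt_9_general n hn p s hp1 hs0 φ hφ0 hφb hφsupp hφ1
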